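/- Let f and g be monotone increasing functions on a complete lattice with g continuous. If f ∘ g* ≥ g* ∘ f pointwise, then (f + g)* = f* ∘ g*. -/
import Mathlib


/-- The least fixedpoint of `f` that is above `X` (for monotone increasing `f`
on a complete lattice, this infimum is itself a fixedpoint, so it is the least
fixedpoint of `f` that is ≥ `X`). -/
def lfpAbove {α : Type*} [CompleteLattice α] (f : α → α) (X : α) : α :=
  sInf {Y | f Y = Y ∧ X ≤ Y}

/-- `g` is continuous: it preserves suprema of (nonempty) chains. -/
def ChainContinuous {α : Type*} [CompleteLattice α] (g : α → α) : Prop :=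
  ∀ s : Set α, IsChain (· ≤ ·) s → s.Nonempty → g (sSup s) = sSup (g '' s)

lemma le_lfpAbove {α : Type*} [CompleteLattice α] (f : α → α) (X : α) :
    X ≤ lfpAbove f X :=
  le_sInf fun _ hY => hY.2

lemma lfpAbove_le {α : Type*} [CompleteLattice α] {f : α → α} {X Y : α}
    (h1 : f Y = Y) (h2 : X ≤ Y) : lfpAbove f X ≤ Y :=
  sInf_le ⟨h1, h2⟩

lemma lfpAbove_fixed {α : Type*} [CompleteLattice α] {f : α → α}
    (hf : Monotone f) (hfi : ∀ X : α, X ≤ f X) (X : α) :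
    f (lfpAbove f X) = lfpAbove f X := by
  have h1 : f (lfpAbove f X) ≤ lfpAbove f X := by
    apply le_sInf
    intro Y hY
    calc f (lfpAbove f X) ≤ f Y := hf (sInf_le hY)
    _ = Y := hY.1
  exact le_antisymm h1 (hfi _)

theorem stmt_8 {α : Type*} [CompleteLattice α] (f g : α → α)
    (hf : Monotone f) (hg : Monotone g)
    (hfi : ∀ X : α, X ≤ f X) (hgi : ∀ X : α, X ≤ g X)
    (hgc : ChainContinuous g)
    (hcomm : ∀ X : α, lfpAbove g (f X) ≤ f (lfpAbove g X)) :
    lfpAbove (fun X => f X ⊔ g X) = fun X => lfpAbove f (lfpAbove g X) := by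
  funext X
  set Z := lfpAbove g X with hZdef
  have hZg : g Z = Z := lfpAbove_fixed hg hgi X
  set F := lfpAbove f Z with hFdef
  have hFf : f F = F := lfpAbove_fixed hf hfi Z
  have hZF : Z ≤ F := le_lfpAbove f Z
  -- key step: F is a fixedpoint of g, via Zorn's lemma
  have hFg : g F = F := by
    set P : Set α := {Y | g Y = Y ∧ Z ≤ Y ∧ Y ≤ F} with hPdef
    have hchain : ∀ c ⊆ P, IsChain (· ≤ ·) c → ∀ y ∈ c, ∃ ub ∈ P, ∀ z ∈ c, z ≤ ub := by
      intro c hcP hc y hy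
      refine ⟨sSup c, ⟨?_, ?_, ?_⟩, fun z hz => le_sSup hz⟩
      · have himg : g '' c = c := by
          apply Set.Subset.antisymm
          · rintro _ ⟨w, hw, rfl⟩
            rwa [(hcP hw).1]
          · intro w hw
            exact ⟨w, hw, (hcP hw).1⟩
        rw [hgc c hc ⟨y, hy⟩, himg]
      · exact le_trans (hcP hy).2.1 (le_sSup hy)
      · exact sSup_le fun z hz => (hcP hz).2.2
    obtain ⟨M, hZM, hMP, hMmax⟩ := zorn_le_nonempty₀ P hchain Z ⟨hZg, le_rfl, hZF⟩
    -- M is maximal in P; show f M ∈ P, hence f M = M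
    obtain ⟨hMg, hZM', hMF⟩ := hMP
    have hMgstar : lfpAbove g M = M :=
      le_antisymm (lfpAbove_le hMg le_rfl) (le_lfpAbove g M)
    have hfMg : g (f M) = f M := by
      have h1 : lfpAbove g (f M) ≤ f M := by
        have := hcomm M
        rwa [hMgstar] at this
      have h2 : lfpAbove g (f M) = f M :=
        le_antisymm h1 (le_lfpAbove g (f M))
      calc g (f M) = g (lfpAbove g (f M)) := by rw [h2]
      _ = lfpAbove g (f M) := lfpAbove_fixed hg hgi (f M)
      _ = f M := h2
    have hfMP : f M ∈ P := by
      refine ⟨hfMg, le_trans hZM' (hfi M), ?_⟩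
      calc f M ≤ f F := hf hMF
      _ = F := hFf
    have hMf : f M = M := le_antisymm (hMmax hfMP (hfi M)) (hfi M)
    have hFM : F ≤ M := lfpAbove_le hMf hZM'
    have : F = M := le_antisymm hFM hMF
    rw [this, hMg]
  -- now prove the equality
  apply le_antisymm
  · exact lfpAbove_le (by simp [hFf, hFg]) (le_trans (le_lfpAbove g X) hZF)
  · set W := lfpAbove (fun X => f X ⊔ g X) X with hWdef
    have hWfix : f W ⊔ g W = W :=
      lfpAbove_fixed (hf.sup hg) (fun Y => le_trans (hfi Y) le_sup_left) X
    have hWf : f W = W := le_antisymm (le_trans le_sup_left hWfix.le) (hfi W)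
    have hWg : g W = W := le_antisymm (le_trans le_sup_right hWfix.le) (hgi W)
    have hXW : X ≤ W := le_lfpAbove _ X
    have hZW : Z ≤ W := lfpAbove_le hWg hXW
    exact lfpAbove_le hWf hZW
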